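/- Let n ≥ 2 and let N be a regular nilpotent n×n complex matrix, i.e. N^n = 0 and N^{n−1} ≠ 0. Then ψ(N) := Id + t^{−1}N + t^{−2}N² + ⋯ + t^{−(n−1)}N^{n−1} lies in the double coset G_0·κ·G_0; that is, there exist g_1, g_2 ∈ SL_n(A) such that ψ(N) = g_1·κ·g_2 in SL_n(F). -/

import Mathlib

/-! Statement 1: For a regular nilpotent complex matrix `N`,
`ψ(N) = Id + t⁻¹N + ⋯ + t^{-(n-1)}N^{n-1}` lies in the double coset `G₀·κ·G₀` in `SL_n(F)`. -/

noncomputable section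

noncomputable section

/-- The field of formal Laurent series over `ℂ`. -/
abbrev FF : Type := LaurentSeries ℂ

/-- The uniformizer `t` of `ℂ((t))`. -/
def tF : FF := HahnSeries.single (1 : ℤ) (1 : ℂ)

/-- An element of `F = ℂ((t))` is integral if it lies in `A = ℂ[[t]]`,
i.e. all coefficients of negative index vanish. -/
def Integral (x : FF) : Prop := ∀ m : ℤ, m < 0 → x.coeff m = 0

/-- Membership in `G₀ = SL_n(ℂ[[t]])`: all entries integral and determinant `1`. -/
def MemG0 {n : ℕ} (g : Matrix (Fin n) (Fin n) FF) : Prop :=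
  g.det = 1 ∧ ∀ i j : Fin n, Integral (g i j)

/-- Membership in the Iwahori subgroup `𝓑`: all entries integral, determinant `1`,
and the matrix of constant terms `h(0)` is upper triangular. -/
def MemIwahori {n : ℕ} (h : Matrix (Fin n) (Fin n) FF) : Prop :=
  h.det = 1 ∧ (∀ i j : Fin n, Integral (h i j)) ∧
    ∀ i j : Fin n, (j : ℕ) < (i : ℕ) → (h i j).coeff 0 = 0

/-- The element `κ = diag(t, t, …, t, t^{-(n-1)})` of `SL_n(F)`. -/
def kappaMat (n : ℕ) : Matrix (Fin n) (Fin n) FF :=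
  Matrix.diagonal fun i => if (i : ℕ) = n - 1 then tF ^ (-((n : ℤ) - 1)) else tF

/-- A complex matrix viewed as a matrix over `F = ℂ((t))`. -/
def liftC {n : ℕ} (Y : Matrix (Fin n) (Fin n) ℂ) : Matrix (Fin n) (Fin n) FF :=
  Y.map (algebraMap ℂ FF)

/-- For a nilpotent complex matrix `Y`, the element
`Ȳ = Id + t⁻¹Y + t⁻²Y² + ⋯ + t^{-(n-1)}Y^{n-1}` of `SL_n(F)`. -/
def Ybar {n : ℕ} (Y : Matrix (Fin n) (Fin n) ℂ) : Matrix (Fin n) (Fin n) FF :=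
  ∑ k ∈ Finset.range n, tF ^ (-(k : ℤ)) • liftC (Y ^ k)

/-!
Since `N ^ n = 0`, `ψ(N)` is the inverse of `1 - t⁻¹N`. A cyclic basis `N^{n-1}v, …, Nv, v`,
rescaled to have determinant one, conjugates `N` by some `P ∈ SL_n(ℂ)` into the shift `S` with
ones on the superdiagonal, so it suffices to factor `(1 - t⁻¹S)⁻¹`. The integral matrix
`G₁ = leftFactor n` with last column `(1, t, …, t^{n-1})` and `-1` on the rest of the subdiagonal
satisfies `(1 - t⁻¹S) G₁ κ = 1 - tSᵀ`, whose inverse `G₂ = rightFactor n = ∑ (tSᵀ)^k` is again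
integral. Hence `ψ(N) = (P G₁) κ (G₂ P⁻¹)`; all determinants are one because `1 - cS` is
unitriangular.
-/

open Matrix

section Shift

def shift (R : Type*) [Zero R] [One R] (n : ℕ) : Matrix (Fin n) (Fin n) R :=
  of fun i j => if (j : ℕ) = i + 1 then 1 else 0

variable {R : Type*} {n : ℕ}

section Semiring

variable [Semiring R]

lemma mul_shift_apply (M : Matrix (Fin n) (Fin n) R) (i j : Fin n) :
    (M * shift R n) i j = if h : 0 < (j : ℕ) then M i ⟨j - 1, by omega⟩ else 0 := by
  split_ifs with h
  · rw [mul_apply, Finset.sum_eq_single ⟨j - 1, by omega⟩]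
    · simp [shift, Nat.sub_add_cancel h]
    · intro k _ hk
      rw [shift, of_apply, if_neg (fun h' => hk (Fin.ext (by simp; omega))), mul_zero]
    · simp
  · exact (mul_apply ..).trans <| Finset.sum_eq_zero fun k _ => by
      rw [shift, of_apply, if_neg (by omega), mul_zero]

lemma shift_mul_apply (M : Matrix (Fin n) (Fin n) R) (i j : Fin n) :
    (shift R n * M) i j = if h : (i : ℕ) + 1 < n then M ⟨i + 1, h⟩ j else 0 := by
  split_ifs with h
  · rw [mul_apply, Finset.sum_eq_single ⟨i + 1, h⟩]
    · simp [shift]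
    · intro k _ hk
      rw [shift, of_apply, if_neg (fun h' => hk (Fin.ext h')), zero_mul]
    · simp
  · exact (mul_apply ..).trans <| Finset.sum_eq_zero fun k _ => by
      rw [shift, of_apply, if_neg (by omega), zero_mul]

lemma shift_pow_apply (k : ℕ) (i j : Fin n) :
    (shift R n ^ k) i j = if (j : ℕ) = i + k then 1 else 0 := by
  induction k generalizing i with
  | zero => simp [one_apply, Fin.ext_iff, eq_comm]
  | succ k ih =>
    rw [pow_succ', shift_mul_apply]
    split_ifs <;> simp_all <;> omega

lemma shift_pow_card : shift R n ^ n = 0 := by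
  ext i j
  rw [shift_pow_apply, if_neg (by omega), Matrix.zero_apply]

lemma map_shift {S : Type*} [Semiring S] (f : R →+* S) : (shift R n).map f = shift S n := by
  ext i j
  simp [shift, apply_ite f]

end Semiring

lemma shift_mem_matrix [Ring R] (S : Subring R) : shift R n ∈ S.matrix := by
  intro i j
  rw [shift, of_apply]
  split_ifs
  exacts [S.one_mem, S.zero_mem]

lemma det_one_sub_smul_shift [CommRing R] (c : R) : (1 - c • shift R n).det = 1 := by
  rw [det_of_isUpperTriangular]
  · simp [shift]
  · intro i j (hij : j < i)
    simp [shift, one_apply, hij.ne', show (j : ℕ) ≠ i + 1 by omega]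

lemma det_one_sub_smul_shift_transpose [CommRing R] (c : R) :
    (1 - c • (shift R n)ᵀ).det = 1 := by
  rw [← transpose_one, ← transpose_smul, ← transpose_sub, det_transpose,
    det_one_sub_smul_shift]

end Shift

section CyclicBasis

variable {K : Type*} [Field K] {n : ℕ}

lemma Module.End.linearIndependent_pow_apply {V : Type*} [AddCommGroup V] [Module K V]
    (f : Module.End K V) (v : V) (hv : (f ^ (n - 1)) v ≠ 0) (hf : (f ^ n) v = 0) :
    LinearIndependent K fun k : Fin n => (f ^ (k : ℕ)) v := by
  have hvanish : ∀ m, n ≤ m → (f ^ m) v = 0 := fun m hm => by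
    rw [← Nat.sub_add_cancel hm, pow_add, Module.End.mul_apply, hf, map_zero]
  rw [Fintype.linearIndependent_iff]
  intro g hg k
  induction k using WellFoundedLT.induction with
  | _ k ih =>
    have hk := congrArg (f ^ (n - 1 - k)) hg
    rw [map_sum, map_zero, Finset.sum_eq_single k] at hk
    · rw [map_smul, ← Module.End.mul_apply, ← pow_add, Nat.sub_add_cancel (by omega)] at hk
      exact (smul_eq_zero.mp hk).resolve_right hv
    · intro j _ hjk
      rcases lt_or_gt_of_ne hjk with hjk | hjk
      · rw [ih j hjk, zero_smul, map_zero]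
      · rw [map_smul, ← Module.End.mul_apply, ← pow_add, hvanish _ (by omega), smul_zero]
    · simp

lemma exists_isUnit_mul_eq_mul_shift (N : Matrix (Fin n) (Fin n) K) (hnil : N ^ n = 0)
    (hreg : N ^ (n - 1) ≠ 0) :
    ∃ P : Matrix (Fin n) (Fin n) K, IsUnit P ∧ N * P = P * shift K n := by
  obtain ⟨v, hv⟩ : ∃ v, N ^ (n - 1) *ᵥ v ≠ 0 := by
    by_contra! h
    exact hreg (mulVec_injective (funext fun v => by rw [h v, zero_mulVec]))
  have hpow (k : ℕ) : (toLin' N ^ k) v = N ^ k *ᵥ v := by rw [← toLin'_pow, toLin'_apply]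
  have hli := (Module.End.linearIndependent_pow_apply (toLin' N) v (n := n)
    (by rwa [hpow]) (by rw [hpow, hnil, zero_mulVec])).comp Fin.rev Fin.rev_injective
  let P : Matrix (Fin n) (Fin n) K := of fun i j => (N ^ (n - 1 - j) *ᵥ v) i
  refine ⟨P, linearIndependent_cols_iff_isUnit.mp ?_, ?_⟩
  · have hcol : P.col = (fun k : Fin n => (toLin' N ^ (k : ℕ)) v) ∘ Fin.rev := by
      funext j i
      simp [P, Fin.val_rev, hpow, Nat.sub_sub, add_comm]
    rwa [hcol]
  · refine Matrix.ext fun i j => ?_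
    have hNP : (N * P) i j = (N ^ (n - 1 - j + 1) *ᵥ v) i := by
      rw [pow_succ', ← mulVec_mulVec]
      rfl
    rw [hNP, mul_shift_apply]
    split_ifs with hj
    · simp only [P, of_apply]
      congr 3
      omega
    · rw [show n - 1 - (j : ℕ) + 1 = n by omega, hnil, zero_mulVec, Pi.zero_apply]

lemma exists_det_eq_one_mul_eq_mul_shift [IsAlgClosed K] (N : Matrix (Fin n) (Fin n) K)
    (hnil : N ^ n = 0) (hreg : N ^ (n - 1) ≠ 0) :
    ∃ P : Matrix (Fin n) (Fin n) K, P.det = 1 ∧ N * P = P * shift K n := by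
  obtain ⟨P, hP, hNP⟩ := exists_isUnit_mul_eq_mul_shift N hnil hreg
  have hn : 0 < n := Nat.pos_of_ne_zero fun h => hreg (by subst h; exact Subsingleton.elim _ _)
  obtain ⟨c, hc⟩ := IsAlgClosed.exists_pow_nat_eq P.det⁻¹ hn
  refine ⟨c • P, ?_, ?_⟩
  · rw [det_smul, Fintype.card_fin, hc,
      inv_mul_cancel₀ ((isUnit_iff_isUnit_det P).mp hP).ne_zero]
  · rw [Matrix.mul_smul, hNP, Matrix.smul_mul]

end CyclicBasis

section LaurentSeries

variable {n : ℕ}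

abbrev integralSubring : Subring FF := (HahnSeries.ofPowerSeries ℤ ℂ).range

lemma integral_iff_mem_integralSubring (x : FF) : Integral x ↔ x ∈ integralSubring := by
  rw [RingHom.mem_range, ← LaurentSeries.val_le_one_iff_eq_coe, ← WithZero.exp_zero,
    ← neg_zero, LaurentSeries.valuation_le_iff_coeff_lt_eq_zero]
  rfl

lemma memG0_iff (g : Matrix (Fin n) (Fin n) FF) :
    MemG0 g ↔ g.det = 1 ∧ g ∈ integralSubring.matrix := by
  simp only [MemG0, integral_iff_mem_integralSubring]
  rfl

lemma MemG0.mul {g h : Matrix (Fin n) (Fin n) FF} (hg : MemG0 g) (hh : MemG0 h) :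
    MemG0 (g * h) := by
  rw [memG0_iff] at hg hh ⊢
  rw [det_mul, hg.1, hh.1, one_mul]
  exact ⟨rfl, mul_mem hg.2 hh.2⟩

lemma tF_mem_integralSubring : tF ∈ integralSubring :=
  ⟨PowerSeries.X, HahnSeries.ofPowerSeries_X⟩

lemma tF_ne_zero : tF ≠ 0 := HahnSeries.single_ne_zero one_ne_zero

/- The action of `FF` on its matrices is not reducibly the one underlying the generic `smul`
instances, so the `smul` lemmas below are stated for it and applied with explicit arguments. -/
lemma smul_pow_matrix (c : FF) (M : Matrix (Fin n) (Fin n) FF) (k : ℕ) :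
    (c • M) ^ k = c ^ k • M ^ k := by
  induction k with
  | zero => rw [pow_zero, pow_zero, pow_zero, one_smul]
  | succ k ih =>
    rw [pow_succ, ih, Matrix.smul_mul (c ^ k) (M ^ k), Matrix.mul_smul (M ^ k) c M, smul_smul,
      ← pow_succ, ← pow_succ]

lemma smul_zero_matrix (c : FF) : c • (0 : Matrix (Fin n) (Fin n) FF) = 0 :=
  Matrix.ext fun _ _ => mul_zero c

lemma liftC_eq_mapMatrix (Y : Matrix (Fin n) (Fin n) ℂ) :
    liftC Y = (algebraMap ℂ FF).mapMatrix Y := rfl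

lemma liftC_shift : liftC (shift ℂ n) = shift FF n := map_shift _

lemma det_liftC (Y : Matrix (Fin n) (Fin n) ℂ) : (liftC Y).det = algebraMap ℂ FF Y.det :=
  (RingHom.map_det _ _).symm

lemma memG0_liftC {P : Matrix (Fin n) (Fin n) ℂ} (hP : P.det = 1) : MemG0 (liftC P) := by
  rw [memG0_iff, det_liftC, hP, map_one]
  exact ⟨rfl, fun i j => ⟨_, (HahnSeries.algebraMap_apply' (Γ := ℤ) (x := P i j)).symm⟩⟩

lemma one_sub_smul_liftC_mul_liftC (c : FF) {N P J : Matrix (Fin n) (Fin n) ℂ}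
    (h : N * P = P * J) : (1 - c • liftC N) * liftC P = liftC P * (1 - c • liftC J) := by
  have hL : liftC N * liftC P = liftC P * liftC J := by
    simp only [liftC_eq_mapMatrix, ← map_mul, h]
  rw [Matrix.sub_mul, Matrix.mul_sub, Matrix.one_mul, Matrix.mul_one,
    Matrix.smul_mul c (liftC N) (liftC P), Matrix.mul_smul (liftC P) c (liftC J), hL]

lemma Ybar_eq_geom_sum (Y : Matrix (Fin n) (Fin n) ℂ) :
    Ybar Y = ∑ k ∈ Finset.range n, (tF⁻¹ • liftC Y) ^ k := by
  refine Finset.sum_congr rfl fun k _ => ?_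
  rw [smul_pow_matrix, _root_.zpow_neg, zpow_natCast, inv_pow, liftC_eq_mapMatrix,
    liftC_eq_mapMatrix, map_pow]

lemma Ybar_mul_one_sub_smul (Y : Matrix (Fin n) (Fin n) ℂ) (hY : Y ^ n = 0) :
    Ybar Y * (1 - tF⁻¹ • liftC Y) = 1 := by
  rw [Ybar_eq_geom_sum, geom_sum_mul_neg, smul_pow_matrix, liftC_eq_mapMatrix, ← map_pow, hY,
    map_zero, smul_zero_matrix, sub_zero]

lemma det_kappaMat : (kappaMat n).det = 1 := by
  cases n with
  | zero => exact det_isEmpty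
  | succ m =>
    rw [kappaMat, det_diagonal, Fin.prod_univ_castSucc]
    simp only [Fin.val_castSucc, Fin.val_last, add_tsub_cancel_right, (Fin.is_lt _).ne, if_false,
      if_true, Finset.prod_const, Finset.card_univ, Fintype.card_fin]
    rw [← zpow_natCast, ← zpow_add₀ tF_ne_zero]
    simp

variable (n) in
def leftFactor : Matrix (Fin n) (Fin n) FF :=
  of fun i j => if (j : ℕ) = n - 1 then tF ^ (i : ℕ) else if (i : ℕ) = j + 1 then -1 else 0

variable (n) in
def rightFactor : Matrix (Fin n) (Fin n) FF :=
  ∑ k ∈ Finset.range n, (tF • (shift FF n)ᵀ) ^ k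

lemma one_sub_smul_shift_mul_leftFactor_mul_kappaMat :
    (1 - tF⁻¹ • shift FF n) * leftFactor n * kappaMat n = 1 - tF • (shift FF n)ᵀ := by
  rw [Matrix.sub_mul, Matrix.one_mul, Matrix.smul_mul tF⁻¹ (shift FF n), kappaMat]
  refine Matrix.ext fun i j => ?_
  simp only [mul_diagonal, Matrix.sub_apply, Matrix.smul_apply, shift_mul_apply]
  simp only [leftFactor, of_apply, one_apply, transpose_apply, shift, Fin.ext_iff, smul_eq_mul]
  have ht := tF_ne_zero
  by_cases hj : (j : ℕ) = n - 1
  · by_cases hi : (i : ℕ) + 1 < n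
    · simp [hj, hi, pow_succ', inv_mul_cancel_left₀ ht, show (i : ℕ) ≠ n - 1 by omega,
        show (i : ℕ) ≠ n - 1 + 1 by omega]
    · have hi' : (i : ℕ) = n - 1 := by omega
      rw [dif_neg hi, if_pos hj, if_pos hj, if_pos (hi'.trans hj.symm), if_neg (by omega),
        mul_zero, sub_zero, mul_zero, sub_zero, ← zpow_natCast, ← zpow_add₀ ht, hi',
        Nat.cast_pred (by omega), add_neg_cancel, zpow_zero]
  · simp only [hj, if_false]
    split_ifs <;> first | omega | ring1 | (field_simp; ring1)

lemma one_sub_smul_shift_transpose_mul_rightFactor :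
    (1 - tF • (shift FF n)ᵀ) * rightFactor n = 1 := by
  rw [rightFactor, mul_neg_geom_sum, smul_pow_matrix, ← transpose_pow, shift_pow_card,
    transpose_zero, smul_zero_matrix, sub_zero]

lemma one_sub_smul_shift_mul_leftFactor_kappaMat_rightFactor :
    (1 - tF⁻¹ • shift FF n) * (leftFactor n * kappaMat n * rightFactor n) = 1 := by
  rw [← Matrix.mul_assoc, ← Matrix.mul_assoc, one_sub_smul_shift_mul_leftFactor_mul_kappaMat,
    one_sub_smul_shift_transpose_mul_rightFactor]

lemma memG0_leftFactor : MemG0 (leftFactor n) := by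
  refine (memG0_iff _).mpr ⟨?_, fun i j => ?_⟩
  · simpa [det_one_sub_smul_shift, det_kappaMat, det_one_sub_smul_shift_transpose] using
      congrArg det (one_sub_smul_shift_mul_leftFactor_mul_kappaMat (n := n))
  · rw [leftFactor, of_apply]
    split_ifs
    exacts [pow_mem tF_mem_integralSubring _, integralSubring.neg_mem integralSubring.one_mem,
      integralSubring.zero_mem]

lemma memG0_rightFactor : MemG0 (rightFactor n) := by
  refine (memG0_iff _).mpr ⟨?_, ?_⟩
  · simpa [det_one_sub_smul_shift_transpose] using
      congrArg det (one_sub_smul_shift_transpose_mul_rightFactor (n := n))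
  · have h : tF • (shift FF n)ᵀ ∈ integralSubring.matrix := fun i j =>
      integralSubring.mul_mem tF_mem_integralSubring (shift_mem_matrix integralSubring j i)
    exact Subring.sum_mem _ fun k _ => Subring.pow_mem _ h k

end LaurentSeries

theorem stmt1_general {n : ℕ} (N : Matrix (Fin n) (Fin n) ℂ)
    (hnil : N ^ n = 0) (hreg : N ^ (n - 1) ≠ 0) :
    ∃ g₁ g₂ : Matrix (Fin n) (Fin n) FF,
      MemG0 g₁ ∧ MemG0 g₂ ∧ Ybar N = g₁ * kappaMat n * g₂ := by
  obtain ⟨P, hPdet, hNP⟩ := exists_det_eq_one_mul_eq_mul_shift N hnil hreg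
  have hPinv : liftC P * liftC P⁻¹ = 1 := by
    rw [liftC_eq_mapMatrix, liftC_eq_mapMatrix, ← map_mul, mul_nonsing_inv P (by simp [hPdet]),
      map_one]
  refine ⟨liftC P * leftFactor n, rightFactor n * liftC P⁻¹,
    (memG0_liftC hPdet).mul memG0_leftFactor, memG0_rightFactor.mul (memG0_liftC ?_),
    left_inv_eq_right_inv (Ybar_mul_one_sub_smul N hnil) ?_⟩
  · rw [det_nonsing_inv, hPdet, Ring.inverse_one]
  calc (1 - tF⁻¹ • liftC N) *
        (liftC P * leftFactor n * kappaMat n * (rightFactor n * liftC P⁻¹))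
      = liftC P * (1 - tF⁻¹ • shift FF n) * (leftFactor n * kappaMat n * rightFactor n)
          * liftC P⁻¹ := by
        rw [← liftC_shift, ← one_sub_smul_liftC_mul_liftC tF⁻¹ hNP]
        simp only [Matrix.mul_assoc]
    _ = 1 := by
        rw [Matrix.mul_assoc (liftC P), one_sub_smul_shift_mul_leftFactor_kappaMat_rightFactor, Matrix.mul_one, hPinv]

/-- For a regular nilpotent `N` (i.e. `N^n = 0`, `N^{n-1} ≠ 0`),
`ψ(N) = Ȳ` lies in `G₀·κ·G₀`. -/
theorem stmt1 {n : ℕ} (hn : 2 ≤ n) (N : Matrix (Fin n) (Fin n) ℂ)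
    (hnil : N ^ n = 0) (hreg : N ^ (n - 1) ≠ 0) :
    ∃ g₁ g₂ : Matrix (Fin n) (Fin n) FF,
      MemG0 g₁ ∧ MemG0 g₂ ∧ Ybar N = g₁ * kappaMat n * g₂ :=
  stmt1_general N hnil hreg
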